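/- For ε > 0 and the squared loss, the inconsistent adversarial training loss (1/n)·Σᵢ max_{‖δᵢ‖₂≤ε} (yᵢ − ⟨xᵢ + δᵢ, θ⟩)² equals (1/n)·Σᵢ(yᵢ − ⟨xᵢ,θ⟩)² + ε²‖θ‖₂² + (2ε/n)·‖θ‖₂·Σᵢ|yᵢ − ⟨xᵢ,θ⟩|. -/

import Mathlib

/-!
Write `r = y - ⟪x, θ⟫`. Over the ball `‖δ‖ ≤ ε` the residual `r - ⟪δ, θ⟫` has absolute value at
most `|r| + ε‖θ‖` by Cauchy–Schwarz, and the bound is attained by `δ = ∓(ε / ‖θ‖) θ`, the sign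
chosen opposite to that of `r`. Hence each inner maximum equals `(|r| + ε‖θ‖)²`, and expanding the
square and averaging gives the three terms.
-/

open Real

noncomputable def ip {d : ℕ} (x y : Fin d → ℝ) : ℝ := ∑ i, x i * y i
noncomputable def norm2 {d : ℕ} (x : Fin d → ℝ) : ℝ := Real.sqrt (∑ i, (x i)^2)

open Metric

section InnerProductSpace

variable {E : Type*} [NormedAddCommGroup E] [InnerProductSpace ℝ E]

lemma exists_norm_le_inner_eq (θ : E) {ε : ℝ} (hε : 0 ≤ ε) {c : ℝ} (hc : |c| = 1) :
    ∃ δ ∈ closedBall (0 : E) ε, inner ℝ δ θ = c * ε * ‖θ‖ := by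
  rcases eq_or_ne θ 0 with rfl | hθ
  · exact ⟨0, mem_closedBall_self hε, by simp⟩
  have hθ' : ‖θ‖ ≠ 0 := norm_ne_zero_iff.mpr hθ
  refine ⟨(c * ε / ‖θ‖) • θ, ?_, ?_⟩
  · rw [mem_closedBall_zero_iff, norm_smul, Real.norm_eq_abs, abs_div, abs_mul, hc, abs_norm,
      abs_of_nonneg hε, one_mul, div_mul_cancel₀ _ hθ']
  · rw [real_inner_smul_left, real_inner_self_eq_norm_sq]
    field_simp

lemma isGreatest_sq_sub_inner_closedBall (r : ℝ) (θ : E) {ε : ℝ} (hε : 0 ≤ ε) :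
    IsGreatest ((fun δ => (r - inner ℝ δ θ) ^ 2) '' closedBall (0 : E) ε)
      ((|r| + ε * ‖θ‖) ^ 2) := by
  constructor
  · obtain ⟨c, hc, hcr⟩ : ∃ c : ℝ, |c| = 1 ∧ |r - c * ε * ‖θ‖| = |r| + ε * ‖θ‖ := by
      rcases le_total 0 r with hr | hr
      · refine ⟨-1, by norm_num, ?_⟩
        rw [abs_of_nonneg hr, abs_of_nonneg (by nlinarith [norm_nonneg θ])]
        ring
      · refine ⟨1, by norm_num, ?_⟩
        rw [abs_of_nonpos hr, abs_of_nonpos (by nlinarith [norm_nonneg θ])]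
        ring
    obtain ⟨δ, hδ, hδθ⟩ := exists_norm_le_inner_eq θ hε hc
    exact ⟨δ, hδ, by dsimp only; rw [hδθ, ← sq_abs, hcr]⟩
  · rintro _ ⟨δ, hδ, rfl⟩
    have hδ : ‖δ‖ ≤ ε := mem_closedBall_zero_iff.mp hδ
    have hbound : |r - inner ℝ δ θ| ≤ |r| + ε * ‖θ‖ :=
      calc |r - inner ℝ δ θ| ≤ |r| + |inner ℝ δ θ| := abs_sub _ _
        _ ≤ |r| + ‖δ‖ * ‖θ‖ := by gcongr; exact abs_real_inner_le_norm δ θ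
        _ ≤ |r| + ε * ‖θ‖ := by gcongr
    simpa only [sq_abs] using pow_le_pow_left₀ (abs_nonneg _) hbound 2

lemma sSup_sq_sub_inner_add_closedBall (b : ℝ) (a θ : E) {ε : ℝ} (hε : 0 ≤ ε) :
    sSup ((fun δ => (b - inner ℝ (a + δ) θ) ^ 2) '' closedBall (0 : E) ε)
      = (|b - inner ℝ a θ| + ε * ‖θ‖) ^ 2 := by
  simp only [inner_add_left, ← sub_sub]
  exact (isGreatest_sq_sub_inner_closedBall _ θ hε).csSup_eq

end InnerProductSpace

lemma norm2_eq_norm_toLp {d : ℕ} (x : Fin d → ℝ) : norm2 x = ‖WithLp.toLp 2 x‖ := by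
  simp [norm2, EuclideanSpace.norm_eq]

lemma ip_eq_inner_toLp {d : ℕ} (x y : Fin d → ℝ) :
    ip x y = inner ℝ (WithLp.toLp 2 x) (WithLp.toLp 2 y) := by
  simp [ip, PiLp.inner_apply, mul_comm]

lemma sSup_sq_sub_ip_add_norm2_le {d : ℕ} (b : ℝ) (a θ : Fin d → ℝ) {ε : ℝ} (hε : 0 ≤ ε) :
    sSup ((fun δ => (b - ip (a + δ) θ) ^ 2) '' {δ : Fin d → ℝ | norm2 δ ≤ ε})
      = (|b - ip a θ| + ε * norm2 θ) ^ 2 := by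
  have hball : {δ : Fin d → ℝ | norm2 δ ≤ ε}
      = WithLp.toLp 2 ⁻¹' closedBall (0 : EuclideanSpace ℝ (Fin d)) ε := by
    ext δ
    simp [norm2_eq_norm_toLp]
  rw [hball, show (fun δ => (b - ip (a + δ) θ) ^ 2)
      = (fun v => (b - inner ℝ (WithLp.toLp 2 a + v) (WithLp.toLp 2 θ)) ^ 2) ∘ WithLp.toLp 2 by
        funext δ; simp [ip_eq_inner_toLp],
    Set.image_comp, Set.image_preimage_eq _ (WithLp.toLp_surjective 2),
    sSup_sq_sub_inner_add_closedBall _ _ _ hε, ip_eq_inner_toLp, norm2_eq_norm_toLp]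

theorem stmt9 (d n : ℕ) (hn : 0 < n) (ε : ℝ) (hε : 0 < ε)
    (x : Fin n → Fin d → ℝ) (y : Fin n → ℝ) (θ : Fin d → ℝ) :
    (1/(n:ℝ)) * ∑ i, sSup ((fun δ => (y i - ip (x i + δ) θ)^2) ''
        {δ : Fin d → ℝ | norm2 δ ≤ ε})
      = (1/(n:ℝ)) * ∑ i, (y i - ip (x i) θ)^2 + ε^2 * norm2 θ ^ 2
        + (2*ε/(n:ℝ)) * norm2 θ * ∑ i, |y i - ip (x i) θ| := by
  have hexpand (r : ℝ) : (|r| + ε * norm2 θ) ^ 2 = r ^ 2 + (ε * norm2 θ) ^ 2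
      + 2 * ε * norm2 θ * |r| := by
    rw [add_sq, sq_abs]; ring
  simp only [sSup_sq_sub_ip_add_norm2_le _ _ _ hε.le, hexpand, Finset.sum_add_distrib,
    Finset.sum_const, Finset.card_univ, Fintype.card_fin, nsmul_eq_mul, ← Finset.mul_sum]
  have hn' : (n : ℝ) ≠ 0 := by positivity
  field_simp
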